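/- arXiv:2102.04405 — 5 statements merged into one kernel-verified Lean document; each statement's English description precedes it below -/
import Mathlib

section
/- Let n be a natural number, let (a_j)_{j=0}^{n} be a log-concave sequence of positive real numbers, and let (b_i)_{i=0}^{2n} be a sequence of nonnegative real numbers such that for every positive rational number r and every index 0 ≤ i ≤ 2n one has r^i · b_i ≤ max_{0 ≤ j ≤ n} r^{2j} · a_j. Then b_{2k} ≤ a_k for every 0 ≤ k ≤ n, and b_{2k+1} ≤ √(a_k · a_{k+1}) for every 0 ≤ k ≤ n−1. -/
private lemma chain_up (f : ℕ → ℝ) (k : ℕ) (h : ∀ m, m < k → f m ≤ f (m + 1)) :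
    ∀ m ≤ k, f m ≤ f k := by
  induction k with
  | zero => intro m hm; simp [Nat.le_zero.mp hm]
  | succ k ih =>
    intro m hm
    rcases Nat.lt_or_ge m (k + 1) with h1 | h1
    · exact le_trans (ih (fun m hm => h m (hm.trans (Nat.lt_succ_self _))) m
        (Nat.lt_succ_iff.mp h1)) (h k (Nat.lt_succ_self k))
    · have : m = k + 1 := le_antisymm hm h1
      simp [this]

private lemma chain_down (f : ℕ → ℝ) (k N : ℕ)
    (h : ∀ m, k ≤ m → m + 1 ≤ N → f (m + 1) ≤ f m) :
    ∀ m, k ≤ m → m ≤ N → f m ≤ f k := by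
  intro m hm
  induction m, hm using Nat.le_induction with
  | base => intro _; exact le_refl _
  | succ m hm ih =>
    intro hN
    exact le_trans (h m hm hN) (ih (by omega))

/-- Let `(a_j)_{j=0}^n` be a log-concave sequence of positive reals and
`(b_i)_{i=0}^{2n}` a sequence of nonnegative reals such that for every positive rational `r`
and every `i ≤ 2n` one has `r^i * b_i ≤ max_{0 ≤ j ≤ n} r^{2j} * a_j`.
Then `b_{2k} ≤ a_k` for all `k ≤ n`, and `b_{2k+1} ≤ √(a_k * a_{k+1})` for all `k ≤ n - 1`. -/
theorem stmt0 (n : ℕ) (a b : ℕ → ℝ)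
    (ha_pos : ∀ j ≤ n, 0 < a j)
    (ha_logconcave : ∀ j, 1 ≤ j → j + 1 ≤ n → a (j - 1) * a (j + 1) ≤ (a j) ^ 2)
    (hb_nonneg : ∀ i ≤ 2 * n, 0 ≤ b i)
    (hmax : ∀ r : ℚ, 0 < r → ∀ i ≤ 2 * n,
      (r : ℝ) ^ i * b i ≤
        (Finset.range (n + 1)).sup'
          (Finset.nonempty_range_iff.mpr (Nat.succ_ne_zero n))
          (fun j => (r : ℝ) ^ (2 * j) * a j)) :
    (∀ k ≤ n, b (2 * k) ≤ a k) ∧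
    (∀ k, k + 1 ≤ n → b (2 * k + 1) ≤ Real.sqrt (a k * a (k + 1))) := by
  have hne : (Finset.range (n + 1)).Nonempty :=
    Finset.nonempty_range_iff.mpr (Nat.succ_ne_zero n)
  -- Extend hmax to all positive reals by continuity/density
  have hmaxR : ∀ r : ℝ, 0 < r → ∀ i ≤ 2 * n,
      r ^ i * b i ≤ (Finset.range (n + 1)).sup' hne (fun j => r ^ (2 * j) * a j) := by
    intro r hr i hi
    set F : ℝ → ℝ :=
      fun x => (Finset.range (n + 1)).sup' hne (fun j => x ^ (2 * j) * a j) - x ^ i * b i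
      with hF
    have hcont : Continuous F := by
      apply Continuous.sub
      · exact Continuous.finset_sup'_apply hne (fun j _ => by fun_prop)
      · fun_prop
    suffices h : 0 ≤ F r by
      have := sub_nonneg.mp h
      exact this
    have hseq : ∀ m : ℕ, ∃ q : ℚ, max (r / 2) (r - 1 / (m + 1)) < (q : ℝ) ∧ (q : ℝ) < r := by
      intro m
      apply exists_rat_btwn
      apply max_lt (by linarith)
      have : (0:ℝ) < 1 / (m + 1) := by positivity
      linarith
    choose q hq1 hq2 using hseq
    have hqpos : ∀ m, 0 < q m := by
      intro m
      have h1 := lt_of_le_of_lt (le_max_left (r / 2) (r - 1 / (m + 1))) (hq1 m)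
      have : (0:ℝ) < q m := by linarith
      exact_mod_cast this
    have htend : Filter.Tendsto (fun m => ((q m : ℚ) : ℝ)) Filter.atTop (nhds r) := by
      apply tendsto_of_tendsto_of_tendsto_of_le_of_le
        (g := fun m : ℕ => r - 1 / ((m : ℝ) + 1)) (h := fun _ : ℕ => r)
      · have h0 : Filter.Tendsto (fun m : ℕ => 1 / ((m : ℝ) + 1)) Filter.atTop (nhds 0) :=
          tendsto_one_div_add_atTop_nhds_zero_nat
        simpa using (tendsto_const_nhds (x := r)).sub h0
      · exact tendsto_const_nhds
      · intro m
        exact le_of_lt (lt_of_le_of_lt (le_max_right _ _) (hq1 m))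
      · intro m
        exact (hq2 m).le
    have hFq : ∀ m, 0 ≤ F (q m) := by
      intro m
      exact sub_nonneg.mpr (hmax (q m) (hqpos m) i hi)
    exact ge_of_tendsto ((hcont.tendsto r).comp htend) (Filter.Eventually.of_forall hFq)
  -- ratio monotonicity from log-concavity
  have ratio : ∀ j m, j ≤ m → m + 1 ≤ n → a (m + 1) * a j ≤ a (j + 1) * a m := by
    intro j m hjm
    induction m, hjm using Nat.le_induction with
    | base => intro _; exact le_refl _
    | succ m hm ih =>
      intro h2
      have hm1 : m + 1 ≤ n := by omega
      have ihh := ih hm1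
      have lc := ha_logconcave (m + 1) (by omega) (by omega)
      simp only [Nat.add_sub_cancel] at lc
      have pj : 0 < a j := ha_pos j (by omega)
      have pj1 : 0 < a (j + 1) := ha_pos (j + 1) (by omega)
      have pm : 0 < a m := ha_pos m (by omega)
      have pm1 : 0 < a (m + 1) := ha_pos (m + 1) (by omega)
      have pm2 : 0 < a (m + 2) := ha_pos (m + 2) (by omega)
      have s1 : a (m + 1) * a j * a (m + 2) ≤ a (j + 1) * a m * a (m + 2) :=
        mul_le_mul_of_nonneg_right ihh pm2.le
      have s2 : a (j + 1) * (a m * a (m + 2)) ≤ a (j + 1) * (a (m + 1)) ^ 2 :=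
        mul_le_mul_of_nonneg_left lc pj1.le
      have key : (a (m + 2) * a j) * a (m + 1) ≤ (a (j + 1) * a (m + 1)) * a (m + 1) := by
        nlinarith [s1, s2]
      have h3 := le_of_mul_le_mul_right key pm1
      linarith [h3]
  -- key unimodality estimate for k with k+1 ≤ n
  have key : ∀ k, k + 1 ≤ n → ∀ j ≤ n,
      (a k / a (k + 1)) ^ j * a j ≤ (a k / a (k + 1)) ^ k * a k := by
    intro k hk j hj
    set x := a k / a (k + 1) with hx
    have pk : 0 < a k := ha_pos k (by omega)
    have pk1 : 0 < a (k + 1) := ha_pos (k + 1) hk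
    have hxpos : 0 < x := div_pos pk pk1
    set f : ℕ → ℝ := fun j => x ^ j * a j with hf
    have up : ∀ m, m < k → f m ≤ f (m + 1) := by
      intro m hm
      have hr := ratio m k (le_of_lt hm) hk
      have pm : 0 < a m := ha_pos m (by omega)
      have pm1 : 0 < a (m + 1) := ha_pos (m + 1) (by omega)
      have h1 : a m ≤ x * a (m + 1) := by
        rw [hx, div_mul_eq_mul_div, le_div_iff₀ pk1]
        nlinarith [hr]
      have : x ^ m * a m ≤ x ^ m * (x * a (m + 1)) :=
        mul_le_mul_of_nonneg_left h1 (pow_pos hxpos m).le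
      calc f m = x ^ m * a m := rfl
        _ ≤ x ^ m * (x * a (m + 1)) := this
        _ = x ^ (m + 1) * a (m + 1) := by ring
    have down : ∀ m, k ≤ m → m + 1 ≤ n → f (m + 1) ≤ f m := by
      intro m hm hmn
      have hr := ratio k m hm hmn
      have pm : 0 < a m := ha_pos m (by omega)
      have pm1 : 0 < a (m + 1) := ha_pos (m + 1) hmn
      have h1 : x * a (m + 1) ≤ a m := by
        rw [hx, div_mul_eq_mul_div, div_le_iff₀ pk1]
        nlinarith [hr]
      calc f (m + 1) = x ^ m * (x * a (m + 1)) := by show x ^ (m+1) * a (m+1) = _; ring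
        _ ≤ x ^ m * a m := mul_le_mul_of_nonneg_left h1 (pow_pos hxpos m).le
        _ = f m := rfl
    rcases le_or_gt j k with hjk | hjk
    · exact chain_up f k up j hjk
    · exact chain_down f k n down j (le_of_lt hjk) hj
  constructor
  · -- even case
    intro k hk
    rcases eq_or_lt_of_le hk with rfl | hkn
    · -- k = n : choose a large real r
      set S := (Finset.range (k + 1)).sup' hne a with hS
      have pk : 0 < a k := ha_pos k le_rfl
      have hSk : a k ≤ S := Finset.le_sup' a (Finset.self_mem_range_succ k)
      have hSpos : 0 < S := lt_of_lt_of_le pk hSk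
      set r : ℝ := 1 + S / a k with hr
      have hrpos : 0 < r := by positivity
      have hr1 : 1 ≤ r := by
        have h0 : 0 < S / a k := by positivity
        rw [hr]; linarith
      have hbound : ∀ j ≤ k, r ^ (2 * j) * a j ≤ r ^ (2 * k) * a k := by
        intro j hj
        rcases eq_or_lt_of_le hj with rfl | hjk
        · exact le_refl _
        · have hSj : a j ≤ S := Finset.le_sup' a (Finset.mem_range_succ_iff.mpr hj)
          have hra : a j ≤ r * a k := by
            have : r * a k = a k + S := by
              rw [hr]; field_simp
            rw [this]; linarith
          have hrp : r ≤ r ^ (2 * (k - j)) := by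
            calc r = r ^ 1 := (pow_one r).symm
              _ ≤ r ^ (2 * (k - j)) := pow_le_pow_right₀ hr1 (by omega)
          have h2 : a j ≤ r ^ (2 * (k - j)) * a k := by
            calc a j ≤ r * a k := hra
              _ ≤ r ^ (2 * (k - j)) * a k := mul_le_mul_of_nonneg_right hrp pk.le
          calc r ^ (2 * j) * a j ≤ r ^ (2 * j) * (r ^ (2 * (k - j)) * a k) :=
                mul_le_mul_of_nonneg_left h2 (pow_pos hrpos _).le
            _ = r ^ (2 * j + 2 * (k - j)) * a k := by rw [pow_add]; ring
            _ = r ^ (2 * k) * a k := by congr 2; omega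
      have hsup : (Finset.range (k + 1)).sup' hne (fun j => r ^ (2 * j) * a j)
          ≤ r ^ (2 * k) * a k := by
        apply Finset.sup'_le
        intro j hj
        exact hbound j (Finset.mem_range_succ_iff.mp hj)
      have := le_trans (hmaxR r hrpos (2 * k) (by omega)) hsup
      exact le_of_mul_le_mul_left (by linarith [this]) (pow_pos hrpos (2 * k))
    · -- k < n
      have hk1 : k + 1 ≤ n := hkn
      set x := a k / a (k + 1) with hx
      have pk : 0 < a k := ha_pos k (by omega)
      have pk1 : 0 < a (k + 1) := ha_pos (k + 1) hk1
      have hxpos : 0 < x := div_pos pk pk1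
      set r : ℝ := Real.sqrt x with hr
      have hrpos : 0 < r := Real.sqrt_pos.mpr hxpos
      have hr2 : r ^ 2 = x := Real.sq_sqrt hxpos.le
      have hrpow : ∀ j : ℕ, r ^ (2 * j) = x ^ j := by
        intro j
        rw [pow_mul, hr2]
      have hsup : (Finset.range (n + 1)).sup' hne (fun j => r ^ (2 * j) * a j)
          ≤ x ^ k * a k := by
        apply Finset.sup'_le
        intro j hj
        rw [hrpow]
        exact key k hk1 j (Finset.mem_range_succ_iff.mp hj)
      have h := le_trans (hmaxR r hrpos (2 * k) (by omega)) hsup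
      rw [hrpow] at h
      exact le_of_mul_le_mul_left h (pow_pos hxpos k)
  · -- odd case
    intro k hk1
    set x := a k / a (k + 1) with hx
    have pk : 0 < a k := ha_pos k (by omega)
    have pk1 : 0 < a (k + 1) := ha_pos (k + 1) hk1
    have hxpos : 0 < x := div_pos pk pk1
    set r : ℝ := Real.sqrt x with hr
    have hrpos : 0 < r := Real.sqrt_pos.mpr hxpos
    have hr2 : r ^ 2 = x := Real.sq_sqrt hxpos.le
    have hrpow : ∀ j : ℕ, r ^ (2 * j) = x ^ j := by
      intro j
      rw [pow_mul, hr2]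
    have hsup : (Finset.range (n + 1)).sup' hne (fun j => r ^ (2 * j) * a j)
        ≤ x ^ k * a k := by
      apply Finset.sup'_le
      intro j hj
      rw [hrpow]
      exact key k hk1 j (Finset.mem_range_succ_iff.mp hj)
    have h := le_trans (hmaxR r hrpos (2 * k + 1) (by omega)) hsup
    have hsplit : r ^ (2 * k + 1) = x ^ k * r := by
      rw [pow_succ, hrpow]
    rw [hsplit] at h
    have hb : 0 ≤ b (2 * k + 1) := hb_nonneg (2 * k + 1) (by omega)
    have h2 : r * b (2 * k + 1) ≤ a k := by
      have := le_of_mul_le_mul_left (by nlinarith [h] : x ^ k * (r * b (2 * k + 1)) ≤ x ^ k * a k) (pow_pos hxpos k)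
      exact this
    apply Real.le_sqrt_of_sq_le
    have h3 : x * b (2 * k + 1) ^ 2 ≤ a k ^ 2 := by
      nlinarith [h2, hb, hr2, hrpos.le, mul_nonneg hrpos.le hb]
    have h5 : x * (a k * a (k + 1)) = a k ^ 2 := by
      rw [hx]; field_simp
    have h6 : x * b (2 * k + 1) ^ 2 ≤ x * (a k * a (k + 1)) := by
      rw [h5]; exact h3
    exact le_of_mul_le_mul_left h6 hxpos
end

section
/- Let d ≥ 1 and let λ_1, …, λ_d be complex numbers. Then limsup_{m→∞} |λ_1^m + λ_2^m + ⋯ + λ_d^m|^{1/m} = max_{1 ≤ i ≤ d} |λ_i|. -/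
/-!
Write `R = max ‖λᵢ‖` and `sₘ = ∑ λᵢ ^ m`. The bound `‖sₘ‖ ≤ d Rᵐ` gives `limsup ≤ R`.
For the converse, group equal `λᵢ` so that `sₘ = ∑ⱼ nⱼ μⱼ ^ m` with distinct `μⱼ` and `nⱼ ≥ 1`.
The vector `(nⱼ μⱼ ^ m)ⱼ` is mapped by the invertible Vandermonde matrix of the `μⱼ` to
`(s_{m+k})_{k<e}`, so some `‖s_{m+k}‖` with `k < e` is at least a fixed multiple of `Rᵐ`;
a window of bounded length does not affect `m`-th roots.
-/

open Filter Topology Matrix Function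

section Vandermonde

variable {𝕜 : Type*} [NontriviallyNormedField 𝕜] [CompleteSpace 𝕜]

theorem Matrix.exists_norm_le_mul_norm_vecMul_vandermonde {e : ℕ} {μ : Fin e → 𝕜}
    (hμ : Injective μ) : ∃ K > (0 : ℝ), ∀ c : Fin e → 𝕜, ‖c‖ ≤ K * ‖c ᵥ* vandermonde μ‖ := by
  classical
  have hker : LinearMap.ker (vandermonde μ).vecMulLinear = ⊥ := by
    refine LinearMap.ker_eq_bot'.mpr fun c hc => ?_
    by_contra hc0
    exact det_vandermonde_ne_zero_iff.mpr hμ (exists_vecMul_eq_zero_iff.mp ⟨c, hc0, hc⟩)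
  obtain ⟨K, hK0, hK⟩ := (vandermonde μ).vecMulLinear.exists_antilipschitzWith hker
  exact ⟨K, hK0, hK.le_mul_norm (map_zero _)⟩

theorem exists_norm_pow_le_mul_norm_sum_mul_pow_add {e : ℕ} {μ : Fin e → 𝕜} (hμ : Injective μ)
    {c : Fin e → 𝕜} {j₀ : Fin e} (hc : c j₀ ≠ 0) :
    ∃ C > (0 : ℝ), ∀ m : ℕ, ∃ k : Fin e, ‖μ j₀‖ ^ m ≤ C * ‖∑ j, c j * μ j ^ (m + k)‖ := by
  obtain ⟨K, hK0, hK⟩ := exists_norm_le_mul_norm_vecMul_vandermonde hμ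
  have hc' : 0 < ‖c j₀‖ := norm_pos_iff.mpr hc
  refine ⟨K / ‖c j₀‖, by positivity, fun m => ?_⟩
  set w := (fun j => c j * μ j ^ m) ᵥ* vandermonde μ
  obtain ⟨k, -, hk⟩ :=
    Finset.exists_max_image Finset.univ (fun k => ‖w k‖) ⟨j₀, Finset.mem_univ _⟩
  have hw : ‖w‖ ≤ ‖w k‖ := (pi_norm_le_iff_of_nonneg (norm_nonneg _)).mpr fun k' => hk k' (by simp)
  have hwk : w k = ∑ j, c j * μ j ^ (m + k) := by
    simp only [w, vecMul, dotProduct, vandermonde_apply, pow_add, mul_assoc]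
  refine ⟨k, ?_⟩
  rw [← hwk, div_mul_eq_mul_div, le_div_iff₀ hc', mul_comm, ← norm_pow, ← norm_mul]
  calc ‖c j₀ * μ j₀ ^ m‖ ≤ K * ‖w‖ := (norm_le_pi_norm (fun j => c j * μ j ^ m) j₀).trans (hK _)
    _ ≤ K * ‖w k‖ := by gcongr

end Vandermonde

open Finset in
theorem Finset.exists_injective_sum_comp_eq_sum_nsmul {ι α M : Type*} [Fintype ι] [DecidableEq α]
    [AddCommMonoid M] (l : ι → α) :
    ∃ (e : ℕ) (μ : Fin e → α) (n : Fin e → ℕ), Injective μ ∧ (∀ j, 0 < n j) ∧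
      (∀ i, ∃ j, μ j = l i) ∧ ∀ f : α → M, ∑ i, f (l i) = ∑ j, n j • f (μ j) := by
  set S := univ.image l
  refine ⟨#S, fun j => S.equivFin.symm j, fun j => #{i | l i = S.equivFin.symm j}, ?_, ?_, ?_, ?_⟩
  · exact fun j j' h => S.equivFin.symm.injective (Subtype.ext h)
  · intro j
    obtain ⟨i, -, hi⟩ := mem_image.mp (S.equivFin.symm j).2
    exact card_pos.mpr ⟨i, mem_filter.mpr ⟨mem_univ i, hi⟩⟩
  · intro i
    refine ⟨S.equivFin ⟨l i, mem_image_of_mem l (mem_univ i)⟩, ?_⟩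
    simp
  · intro f
    rw [sum_comp f l, ← sum_coe_sort S, ← S.equivFin.symm.sum_comp]

theorem exists_norm_pow_le_mul_norm_sum_pow_add {𝕜 ι : Type*} [NontriviallyNormedField 𝕜]
    [CompleteSpace 𝕜] [CharZero 𝕜] [Fintype ι] (l : ι → 𝕜) (i₀ : ι) :
    ∃ C > (0 : ℝ), ∃ e : ℕ, ∀ m : ℕ, ∃ k < e, ‖l i₀‖ ^ m ≤ C * ‖∑ i, l i ^ (m + k)‖ := by
  classical
  obtain ⟨e, μ, n, hμ, hn, hrange, hsum⟩ := Finset.exists_injective_sum_comp_eq_sum_nsmul (M := 𝕜) l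
  obtain ⟨j₀, hj₀⟩ := hrange i₀
  obtain ⟨C, hC, hwindow⟩ := exists_norm_pow_le_mul_norm_sum_mul_pow_add hμ
    (c := fun j => (n j : 𝕜)) (j₀ := j₀) (Nat.cast_ne_zero.mpr (hn j₀).ne')
  refine ⟨C, hC, e, fun m => ?_⟩
  obtain ⟨k, hk⟩ := hwindow m
  have hpow : ∑ i, l i ^ (m + k) = ∑ j, (n j : 𝕜) * μ j ^ (m + k) := by
    simpa only [nsmul_eq_mul] using hsum (· ^ (m + k))
  refine ⟨k, k.isLt, ?_⟩
  rwa [← hj₀, hpow]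

section RootTest

variable {a : ℕ → ℝ} {C r : ℝ}

theorem tendsto_const_rpow_inv_natCast (hC : 0 < C) :
    Tendsto (fun m : ℕ => C ^ (m : ℝ)⁻¹) atTop (𝓝 1) := by
  simpa using (tendsto_const_nhds (x := C)).rpow
    (tendsto_inv_atTop_zero.comp tendsto_natCast_atTop_atTop) (Or.inl hC.ne')

theorem eventually_rpow_inv_le_of_le_mul_pow (ha : ∀ m, 0 ≤ a m) (hC : 0 < C) (hr : 0 ≤ r)
    (h : ∀ m, a m ≤ C * r ^ m) :
    ∀ᶠ m in atTop, a m ^ (m : ℝ)⁻¹ ≤ C ^ (m : ℝ)⁻¹ * r := by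
  filter_upwards [eventually_ne_atTop 0] with m hm
  calc a m ^ (m : ℝ)⁻¹ ≤ (C * r ^ m) ^ (m : ℝ)⁻¹ := by gcongr; exacts [ha m, h m]
    _ = C ^ (m : ℝ)⁻¹ * r := by
      rw [Real.mul_rpow hC.le (by positivity), Real.pow_rpow_inv_natCast hr hm]

theorem isBoundedUnder_rpow_inv_of_le_mul_pow (ha : ∀ m, 0 ≤ a m) (hC : 0 < C) (hr : 0 ≤ r)
    (h : ∀ m, a m ≤ C * r ^ m) :
    IsBoundedUnder (· ≤ ·) atTop (fun m => a m ^ (m : ℝ)⁻¹) :=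
  ((tendsto_const_rpow_inv_natCast hC).mul_const r).isBoundedUnder_le.mono_le
    (eventually_rpow_inv_le_of_le_mul_pow ha hC hr h)

theorem limsup_rpow_inv_le_of_le_mul_pow (ha : ∀ m, 0 ≤ a m) (hC : 0 < C) (hr : 0 ≤ r)
    (h : ∀ m, a m ≤ C * r ^ m) :
    limsup (fun m => a m ^ (m : ℝ)⁻¹) atTop ≤ r := by
  have hlim := (tendsto_const_rpow_inv_natCast hC).mul_const r
  rw [one_mul] at hlim
  calc limsup (fun m => a m ^ (m : ℝ)⁻¹) atTop
        ≤ limsup (fun m : ℕ => C ^ (m : ℝ)⁻¹ * r) atTop :=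
        limsup_le_limsup (eventually_rpow_inv_le_of_le_mul_pow ha hC hr h)
          (isCoboundedUnder_le_of_le atTop fun m => Real.rpow_nonneg (ha m) _)
          hlim.isBoundedUnder_le
    _ = r := hlim.limsup_eq

theorem frequently_pow_le_of_forall_exists_lt_add {e : ℕ} (hC : 0 < C)
    (h : ∀ m, ∃ k < e, r ^ m ≤ C * a (m + k)) {ρ : ℝ} (hρ : 0 < ρ) (hρr : ρ < r) :
    ∃ᶠ m in atTop, ρ ^ m ≤ a m := by
  have hgrow : Tendsto (fun m : ℕ => (r / ρ) ^ m) atTop atTop :=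
    tendsto_pow_atTop_atTop_of_one_lt ((one_lt_div hρ).mpr hρr)
  refine frequently_atTop.mpr fun N => ?_
  obtain ⟨m, hm, hmN⟩ :=
    ((hgrow.eventually_ge_atTop (C * (ρ + 1) ^ e)).and (eventually_ge_atTop N)).exists
  obtain ⟨k, hke, hk⟩ := h m
  refine ⟨m + k, by omega, le_of_mul_le_mul_left ?_ hC⟩
  calc C * ρ ^ (m + k) ≤ ρ ^ m * (C * (ρ + 1) ^ e) := by
        rw [pow_add, mul_left_comm]
        gcongr
        calc ρ ^ k ≤ (ρ + 1) ^ k := by gcongr; linarith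
          _ ≤ (ρ + 1) ^ e := pow_le_pow_right₀ (by linarith) hke.le
    _ ≤ ρ ^ m * (r / ρ) ^ m := by gcongr
    _ = r ^ m := by rw [← mul_pow, mul_div_cancel₀ _ hρ.ne']
    _ ≤ C * a (m + k) := hk

theorem le_limsup_rpow_inv_of_forall_exists_lt_add {e : ℕ} (ha : ∀ m, 0 ≤ a m)
    (hbdd : IsBoundedUnder (· ≤ ·) atTop (fun m => a m ^ (m : ℝ)⁻¹)) (hC : 0 < C)
    (h : ∀ m, ∃ k < e, r ^ m ≤ C * a (m + k)) :
    r ≤ limsup (fun m => a m ^ (m : ℝ)⁻¹) atTop := by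
  refine le_of_forall_lt_imp_le_of_dense fun ρ hρr => ?_
  rcases le_or_gt ρ 0 with hρ | hρ
  · exact hρ.trans
      (le_limsup_of_frequently_le (Frequently.of_forall fun m => Real.rpow_nonneg (ha m) _) hbdd)
  refine le_limsup_of_frequently_le ?_ hbdd
  refine ((frequently_pow_le_of_forall_exists_lt_add hC h hρ hρr).and_eventually
    (eventually_ne_atTop 0)).mono fun m ⟨hm, hm0⟩ => ?_
  calc ρ = (ρ ^ m) ^ (m : ℝ)⁻¹ := (Real.pow_rpow_inv_natCast hρ.le hm0).symm
    _ ≤ a m ^ (m : ℝ)⁻¹ := by gcongr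

end RootTest

/-- For complex numbers `λ_1, …, λ_d` (`d ≥ 1`),
`limsup_{m→∞} |λ_1^m + ⋯ + λ_d^m|^{1/m} = max_{1 ≤ i ≤ d} |λ_i|`. -/
theorem stmt3 (d : ℕ) (hd : 1 ≤ d) (l : Fin d → ℂ) :
    Filter.limsup
      (fun m : ℕ => ‖∑ i : Fin d, (l i) ^ m‖ ^ ((m : ℝ)⁻¹)) Filter.atTop
      = Finset.univ.sup'
          (Finset.univ_nonempty_iff.mpr (Fin.pos_iff_nonempty.mp hd))
          (fun i => ‖l i‖) := by
  obtain ⟨i₀, -, hi₀⟩ := Finset.exists_mem_eq_sup' (Finset.univ_nonempty_iff.mpr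
    (Fin.pos_iff_nonempty.mp hd)) fun i => ‖l i‖
  set R := Finset.univ.sup' _ fun i => ‖l i‖
  have hR : 0 ≤ R := hi₀ ▸ norm_nonneg _
  have hd' : (0 : ℝ) < d := by exact_mod_cast hd
  have hnorm : ∀ m, 0 ≤ ‖∑ i, l i ^ m‖ := fun m => norm_nonneg _
  have hupper : ∀ m, ‖∑ i, l i ^ m‖ ≤ d * R ^ m := fun m =>
    calc ‖∑ i, l i ^ m‖ ≤ ∑ i, ‖l i‖ ^ m := norm_sum_le_of_le _ fun i _ => (norm_pow _ _).le
      _ ≤ ∑ _i : Fin d, R ^ m := Finset.sum_le_sum fun i _ =>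
        pow_le_pow_left₀ (norm_nonneg _) (Finset.le_sup' (fun i => ‖l i‖) (Finset.mem_univ i)) m
      _ = d * R ^ m := by simp
  obtain ⟨C, hC, e, hwindow⟩ := exists_norm_pow_le_mul_norm_sum_pow_add l i₀
  refine le_antisymm (limsup_rpow_inv_le_of_le_mul_pow hnorm hd' hR hupper) ?_
  exact le_limsup_rpow_inv_of_forall_exists_lt_add hnorm
    (isBoundedUnder_rpow_inv_of_le_mul_pow hnorm hd' hR hupper) hC (hi₀ ▸ hwindow)
end

section
/- Let d ≥ 1 and let A be a d × d complex matrix. Then limsup_{m→∞} |tr(A^m)|^{1/m} equals the spectral radius of A, i.e., the maximum of the absolute values of the (complex) eigenvalues of A. -/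
/-!
Over `ℂ`, `tr (A ^ m) = ∑ λ, n_λ λ ^ m`, the sum running over the spectrum, where `n_λ ≥ 1` is the
dimension of the generalised eigenspace of `λ`. For such a power sum `s_m` with `ρ = max |λ|`, the
bound `|s_m| ≤ (∑ n_λ) ρ ^ m` gives `limsup |s_m| ^ (1/m) ≤ ρ`. Conversely, expanding
`|s_m / ρ ^ m| ^ 2` as a double sum, the Cesàro means of the cross terms are averages of geometric
sequences with ratio `≠ 1` in the closed unit disc and tend to `0`, so these means converge to
`∑_{|λ| = ρ} n_λ ^ 2 ≥ 1`; hence `|s_m| ≥ ρ ^ m / 2` infinitely often.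
-/

open Filter Topology Finset ComplexConjugate

namespace Module.End

open LinearMap

theorem trace_pow_of_isNilpotent_sub_algebraMap {R M : Type*} [CommRing R] [IsReduced R]
    [StrongRankCondition R] [AddCommGroup M] [Module R M] [Module.Free R M] [Module.Finite R M]
    {g : End R M} {μ : R} (hg : IsNilpotent (g - algebraMap R (End R M) μ)) (m : ℕ) :
    trace R M (g ^ m) = μ ^ m * finrank R M := by
  induction m with
  | zero => simp
  | succ m ih =>
    rw [pow_succ, mul_eq_comp, trace_comp_eq_mul_of_commute_of_isNilpotent μ
      ((Commute.refl g).pow_left m) hg, ih, pow_succ]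
    ring

variable {K V : Type*} [Field K] [AddCommGroup V] [Module K V] [FiniteDimensional K V]

theorem maxGenEigenspace_ne_bot_iff_mem_spectrum {f : End K V} {μ : K} :
    f.maxGenEigenspace μ ≠ ⊥ ↔ μ ∈ spectrum K f := by
  rw [← hasUnifEigenvalue_iff_mem_spectrum,
    ← hasUnifEigenvalue_iff_hasUnifEigenvalue_one (k := ⊤) (by simp)]
  rfl

theorem trace_pow_eq_sum_finrank_mul_pow [IsAlgClosed K] (f : End K V) {S : Finset K}
    (hS : (S : Set K) = spectrum K f) (m : ℕ) :
    trace K V (f ^ m) = ∑ μ ∈ S, (finrank K (f.maxGenEigenspace μ) : K) * μ ^ m := by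
  classical
  have hN : {μ | f.maxGenEigenspace μ ≠ ⊥}.Finite :=
    WellFoundedGT.finite_ne_bot_of_iSupIndep f.independent_maxGenEigenspace
  have hNS : hN.toFinset = S := by
    ext μ
    simp [maxGenEigenspace_ne_bot_iff_mem_spectrum, ← hS]
  rw [trace_eq_sum_trace_restrict' (DirectSum.isInternal_submodule_of_iSupIndep_of_iSup_eq_top
    f.independent_maxGenEigenspace f.iSup_maxGenEigenspace_eq_top) hN
    (fun μ ↦ f.mapsTo_maxGenEigenspace_of_comm ((Commute.refl f).pow_right m) μ), hNS]
  refine sum_congr rfl fun μ _ ↦ ?_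
  -- `f.restrict _ - algebraMap K _ μ` and `(f - algebraMap K _ μ).restrict _` agree definitionally.
  rw [← pow_restrict m (f.mapsTo_maxGenEigenspace_of_comm (Commute.refl f) μ),
    trace_pow_of_isNilpotent_sub_algebraMap
      (f.isNilpotent_restrict_maxGenEigenspace_sub_algebraMap μ), mul_comm]

end Module.End

theorem Complex.mul_conj_eq_one_iff {a b : ℂ} (ha : ‖a‖ ≤ 1) (hb : ‖b‖ ≤ 1) :
    a * conj b = 1 ↔ a = b ∧ ‖a‖ = 1 := by
  refine ⟨fun h ↦ ?_, fun ⟨hab, ha1⟩ ↦ by rw [← hab, Complex.mul_conj', ha1]; simp⟩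
  have hnorm : ‖a‖ * ‖b‖ = 1 := by simpa using congrArg norm h
  have ha1 : ‖a‖ = 1 := by nlinarith [norm_nonneg a, norm_nonneg b]
  have hb1 : ‖b‖ = 1 := by nlinarith [norm_nonneg a, norm_nonneg b]
  have hb0 : conj b ≠ 0 := by simp [← norm_ne_zero_iff, hb1]
  refine ⟨mul_right_cancel₀ hb0 ?_, ha1⟩
  rw [h, Complex.mul_conj', hb1]
  simp

theorem Complex.tendsto_cesaro_pow {ζ : ℂ} (hζ : ‖ζ‖ ≤ 1) :
    Tendsto (fun N : ℕ ↦ (N : ℂ)⁻¹ * ∑ m ∈ range N, ζ ^ m) atTop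
      (𝓝 (if ζ = 1 then 1 else 0)) := by
  by_cases h1 : ζ = 1
  · simp only [h1, if_true, one_pow, sum_const, card_range, nsmul_eq_mul, mul_one]
    refine tendsto_const_nhds.congr' ?_
    filter_upwards [eventually_ne_atTop 0] with N hN
    exact (inv_mul_cancel₀ (Nat.cast_ne_zero.mpr hN)).symm
  · rw [if_neg h1]
    refine squeeze_zero_norm (a := fun N : ℕ ↦ (N : ℝ)⁻¹ * (2 / ‖ζ - 1‖)) (fun N ↦ ?_) ?_
    · rw [geom_sum_eq h1, norm_mul, norm_inv, Complex.norm_natCast, norm_div]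
      gcongr
      calc ‖ζ ^ N - 1‖ ≤ ‖ζ ^ N‖ + ‖(1 : ℂ)‖ := norm_sub_le _ _
        _ ≤ 2 := by rw [norm_pow, norm_one]; linarith [pow_le_one₀ (n := N) (norm_nonneg ζ) hζ]
    · simpa using tendsto_inv_atTop_nhds_zero_nat.mul_const (2 / ‖ζ - 1‖)

theorem Complex.sq_norm_sum_mul_pow_eq_sum_product {ι : Type*} (S : Finset ι) (c z : ι → ℂ)
    (m : ℕ) :
    (‖∑ i ∈ S, c i * z i ^ m‖ : ℂ) ^ 2 =
      ∑ p ∈ S ×ˢ S, c p.1 * conj (c p.2) * (z p.1 * conj (z p.2)) ^ m := by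
  rw [← Complex.mul_conj', map_sum, sum_mul_sum, sum_product]
  simp only [map_mul, map_pow, mul_pow]
  exact sum_congr rfl fun _ _ ↦ sum_congr rfl fun _ _ ↦ by ring

theorem Complex.tendsto_cesaro_sq_norm_sum_mul_pow {ι : Type*} {S : Finset ι} {z : ι → ℂ}
    (hz : ∀ i ∈ S, ‖z i‖ ≤ 1) (hinj : Set.InjOn z S) (c : ι → ℂ) :
    Tendsto (fun N : ℕ ↦ (N : ℝ)⁻¹ * ∑ m ∈ range N, ‖∑ i ∈ S, c i * z i ^ m‖ ^ 2) atTop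
      (𝓝 (∑ i ∈ S with ‖z i‖ = 1, ‖c i‖ ^ 2)) := by
  classical
  rw [← tendsto_ofReal_iff]
  set w : ι × ι → ℂ := fun p ↦ c p.1 * conj (c p.2)
  set ζ : ι × ι → ℂ := fun p ↦ z p.1 * conj (z p.2)
  have hmean : ∀ N : ℕ, (((N : ℝ)⁻¹ * ∑ m ∈ range N, ‖∑ i ∈ S, c i * z i ^ m‖ ^ 2 : ℝ) : ℂ) =
      ∑ p ∈ S ×ˢ S, w p * ((N : ℂ)⁻¹ * ∑ m ∈ range N, ζ p ^ m) := fun N ↦ by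
    push_cast
    simp_rw [Complex.sq_norm_sum_mul_pow_eq_sum_product, mul_sum, sum_comm (s := range N)]
    exact sum_congr rfl fun _ _ ↦ sum_congr rfl fun _ _ ↦ by ring
  have hζ : ∀ p ∈ S ×ˢ S, ‖ζ p‖ ≤ 1 := fun p hp ↦ by
    rw [mem_product] at hp
    simpa [ζ] using mul_le_one₀ (hz _ hp.1) (norm_nonneg _) (hz _ hp.2)
  have hlim : ∑ p ∈ S ×ˢ S, w p * (if ζ p = 1 then 1 else 0)
      = ((∑ i ∈ S with ‖z i‖ = 1, ‖c i‖ ^ 2 : ℝ) : ℂ) := by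
    rw [sum_product, sum_filter]
    push_cast
    refine sum_congr rfl fun i hi ↦ ?_
    have hcond : ∀ j ∈ S, ζ (i, j) = 1 ↔ ‖z i‖ = 1 ∧ i = j := fun j hj ↦ by
      rw [Complex.mul_conj_eq_one_iff (hz i hi) (hz j hj), hinj.eq_iff hi hj, and_comm]
    rw [sum_congr rfl fun j hj ↦ by rw [if_congr (hcond j hj) rfl rfl]]
    by_cases h1 : ‖z i‖ = 1
    · simp [h1, hi, w, Complex.mul_conj']
    · simp [h1]
  rw [← hlim]
  exact (tendsto_finsetSum _ fun p hp ↦ (Complex.tendsto_cesaro_pow (hζ p hp)).const_mul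
    (w p)).congr fun N ↦ (hmean N).symm

theorem frequently_lt_of_tendsto_cesaro {u : ℕ → ℝ} {L b : ℝ}
    (hu : Tendsto (fun N : ℕ ↦ (N : ℝ)⁻¹ * ∑ m ∈ range N, u m) atTop (𝓝 L)) (hb : b < L) :
    ∃ᶠ m in atTop, b < u m := by
  by_contra h
  obtain ⟨N₀, hN₀⟩ := eventually_atTop.mp (not_frequently.mp h)
  set v : ℕ → ℝ := fun m ↦ if m < N₀ then u m else b
  have huv : ∀ m, u m ≤ v m := fun m ↦ by
    by_cases hm : m < N₀
    · simp [v, hm]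
    · simpa [v, hm] using hN₀ m (not_lt.mp hm)
  have hv : Tendsto v atTop (𝓝 b) := tendsto_const_nhds.congr' <| by
    filter_upwards [eventually_ge_atTop N₀] with m hm
    simp [v, not_lt.mpr hm]
  have hLb : L ≤ b := le_of_tendsto_of_tendsto' hu hv.cesaro fun N ↦ by
    gcongr with m
    exact huv m
  linarith

theorem tendsto_mul_pow_rpow_inv {C ρ : ℝ} (hC : 0 < C) (hρ : 0 ≤ ρ) :
    Tendsto (fun m : ℕ ↦ (C * ρ ^ m) ^ (m : ℝ)⁻¹) atTop (𝓝 ρ) := by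
  have hroot : Tendsto (fun m : ℕ ↦ C ^ (m : ℝ)⁻¹ * ρ) atTop (𝓝 ρ) := by
    simpa using ((tendsto_const_nhds (x := C)).rpow tendsto_inv_atTop_nhds_zero_nat
      (.inl hC.ne')).mul_const ρ
  refine hroot.congr' ?_
  filter_upwards [eventually_ne_atTop 0] with m hm
  rw [Real.mul_rpow hC.le (by positivity), Real.pow_rpow_inv_natCast hρ hm]

theorem limsup_rpow_inv_eq_of_le_of_frequently_le {u : ℕ → ℝ} {C δ ρ : ℝ} (hu : ∀ m, 0 ≤ u m)
    (hC : 0 < C) (hδ : 0 < δ) (hρ : 0 ≤ ρ) (hupper : ∀ m, u m ≤ C * ρ ^ m)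
    (hlower : ∃ᶠ m in atTop, δ * ρ ^ m ≤ u m) :
    limsup (fun m : ℕ ↦ u m ^ (m : ℝ)⁻¹) atTop = ρ := by
  have hle : ∀ m : ℕ, u m ^ (m : ℝ)⁻¹ ≤ (C * ρ ^ m) ^ (m : ℝ)⁻¹ := fun m ↦
    Real.rpow_le_rpow (hu m) (hupper m) (by positivity)
  have hbdd : IsBoundedUnder (· ≤ ·) atTop fun m : ℕ ↦ u m ^ (m : ℝ)⁻¹ :=
    (tendsto_mul_pow_rpow_inv hC hρ).isBoundedUnder_le.mono_le (.of_forall hle)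
  refine le_antisymm ?_ (le_of_forall_lt_imp_le_of_dense fun r hr ↦ ?_)
  · rw [← (tendsto_mul_pow_rpow_inv hC hρ).limsup_eq]
    exact limsup_le_limsup (.of_forall hle)
      (isCoboundedUnder_le_of_le atTop fun m ↦ Real.rpow_nonneg (hu m) _)
      (tendsto_mul_pow_rpow_inv hC hρ).isBoundedUnder_le
  · refine le_limsup_of_frequently_le ?_ hbdd
    refine (hlower.and_eventually
      ((tendsto_mul_pow_rpow_inv hδ hρ).eventually (eventually_ge_nhds hr))).mono ?_
    rintro m ⟨hm, hrm⟩
    exact hrm.trans (Real.rpow_le_rpow (by positivity) hm (by positivity))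

theorem frequently_le_norm_sum_mul_pow {S : Finset ℂ} {c : ℂ → ℂ} {μ : ℂ} (hμ : μ ∈ S)
    (hcμ : c μ ≠ 0) (hmax : ∀ x ∈ S, ‖x‖ ≤ ‖μ‖) :
    ∃ᶠ m in atTop, ‖c μ‖ / 2 * ‖μ‖ ^ m ≤ ‖∑ x ∈ S, c x * x ^ m‖ := by
  rcases (norm_nonneg μ).eq_or_lt with hρ | hρ
  · exact frequently_atTop.2 fun m ↦ ⟨m + 1, by omega, by simp [← hρ]⟩
  set ρ := ‖μ‖
  have hz : ∀ x ∈ S, ‖x / (ρ : ℂ)‖ ≤ 1 := fun x hx ↦ by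
    rw [norm_div, Complex.norm_real, Real.norm_of_nonneg hρ.le]
    exact div_le_one_of_le₀ (hmax x hx) hρ.le
  have hinj : Set.InjOn (· / (ρ : ℂ)) S := fun x _ y _ h ↦ by
    simpa [Complex.ofReal_ne_zero.mpr hρ.ne'] using h
  have hL : (‖c μ‖ / 2) ^ 2 < ∑ x ∈ S with ‖x / (ρ : ℂ)‖ = 1, ‖c x‖ ^ 2 := by
    have hμ1 : μ ∈ S.filter (‖· / (ρ : ℂ)‖ = 1) := mem_filter.mpr ⟨hμ, by
      rw [norm_div, Complex.norm_real, Real.norm_of_nonneg hρ.le, div_self hρ.ne']⟩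
    calc (‖c μ‖ / 2) ^ 2 < ‖c μ‖ ^ 2 := by
          have := norm_pos_iff.mpr hcμ; nlinarith
      _ ≤ _ := single_le_sum (f := fun x ↦ ‖c x‖ ^ 2) (fun x _ ↦ by positivity) hμ1
  refine (frequently_lt_of_tendsto_cesaro
    (Complex.tendsto_cesaro_sq_norm_sum_mul_pow hz hinj c) hL).mono fun m hm ↦ ?_
  have hscale : ∑ x ∈ S, c x * (x / ρ) ^ m = (∑ x ∈ S, c x * x ^ m) / (ρ : ℂ) ^ m := by
    simp_rw [div_pow, mul_div_assoc', sum_div]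
  rw [hscale, norm_div, norm_pow, Complex.norm_real, Real.norm_of_nonneg hρ.le] at hm
  rw [← le_div_iff₀ (by positivity)]
  exact (pow_lt_pow_iff_left₀ (by positivity) (by positivity) two_ne_zero).mp hm |>.le

theorem limsup_norm_sum_mul_pow_rpow_inv {S : Finset ℂ} {c : ℂ → ℂ} {μ : ℂ} (hμ : μ ∈ S)
    (hcμ : c μ ≠ 0) (hmax : ∀ x ∈ S, ‖x‖ ≤ ‖μ‖) :
    limsup (fun m : ℕ ↦ ‖∑ x ∈ S, c x * x ^ m‖ ^ (m : ℝ)⁻¹) atTop = ‖μ‖ := by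
  have hC : 0 < ∑ x ∈ S, ‖c x‖ :=
    (norm_pos_iff.mpr hcμ).trans_le (single_le_sum (fun x _ ↦ norm_nonneg (c x)) hμ)
  refine limsup_rpow_inv_eq_of_le_of_frequently_le (fun m ↦ norm_nonneg _) hC (by positivity)
    (norm_nonneg μ) (fun m ↦ ?_) (frequently_le_norm_sum_mul_pow hμ hcμ hmax)
  calc ‖∑ x ∈ S, c x * x ^ m‖ ≤ ∑ x ∈ S, ‖c x‖ * ‖μ‖ ^ m := by
        refine (norm_sum_le _ _).trans (sum_le_sum fun x hx ↦ ?_)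
        rw [norm_mul, norm_pow]
        gcongr
        exact hmax x hx
    _ = (∑ x ∈ S, ‖c x‖) * ‖μ‖ ^ m := (sum_mul ..).symm

/-- For a `d × d` complex matrix `A` (`d ≥ 1`),
`limsup_{m→∞} |tr(A^m)|^{1/m}` equals the spectral radius of `A`, i.e. the maximum of the
moduli of its (complex) eigenvalues. -/
theorem stmt4 (d : ℕ) (hd : 1 ≤ d) (A : Matrix (Fin d) (Fin d) ℂ) :
    ∃ μ ∈ spectrum ℂ A,
      (∀ lam ∈ spectrum ℂ A, ‖lam‖ ≤ ‖μ‖) ∧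
      Filter.limsup
        (fun m : ℕ => ‖Matrix.trace (A ^ m)‖ ^ ((m : ℝ)⁻¹)) Filter.atTop
        = ‖μ‖ := by
  obtain ⟨S, hS⟩ := (Matrix.finite_spectrum A).exists_finset_coe
  have hS' : (S : Set ℂ) = spectrum ℂ (Matrix.toLin' A) := hS.trans (Matrix.spectrum_toLin' A).symm
  have : Nonempty (Fin d) := ⟨⟨0, hd⟩⟩
  obtain ⟨μ, hμS, hmax⟩ := S.exists_max_image (‖·‖) <| by
    simpa [← Finset.coe_nonempty, hS] using
      spectrum.nonempty_of_isAlgClosed_of_finiteDimensional ℂ A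
  have hcμ : (Module.finrank ℂ (Module.End.maxGenEigenspace (Matrix.toLin' A) μ) : ℂ) ≠ 0 := by
    rw [Nat.cast_ne_zero, ne_eq, Submodule.finrank_eq_zero, ← ne_eq,
      Module.End.maxGenEigenspace_ne_bot_iff_mem_spectrum, ← hS']
    exact hμS
  refine ⟨μ, hS ▸ hμS, fun lam hlam ↦ hmax lam (by rwa [← hS] at hlam), ?_⟩
  simp_rw [← Matrix.trace_toLin'_eq, Matrix.toLin'_pow,
    Module.End.trace_pow_eq_sum_finrank_mul_pow _ hS']
  exact limsup_norm_sum_mul_pow_rpow_inv hμS hcμ hmax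
end

section
/- Let V be a finite-dimensional normed complex vector space and φ a linear endomorphism of V. Suppose there exist constants C > 0 and r > 0 such that the operator norm satisfies ‖φ^m‖ ≤ C · r^m for every integer m ≥ 1. Then for every complex number λ with |λ| = r, the generalized eigenspace of φ for λ equals the eigenspace of φ for λ; in particular ker((φ − λ·id)^2) = ker(φ − λ·id), i.e., φ has no Jordan block of size ≥ 2 for any eigenvalue of modulus r. -/
/-!
Write `g = φ - μ` and suppose `g² v = 0`; put `w = g v`, so that `φ w = μ w`. Then
`φ^(m+1) v = μ^(m+1) v + (m+1) μ^m w`, and comparing norms with `‖φ^(m+1)‖ ≤ C r^(m+1)` and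
`|μ| = r > 0` gives `(m+1) ‖w‖ ≤ (C+1) r ‖v‖` for every `m`, whence `w = 0`. Once
`ker g² = ker g`, all the kernels `ker g^k` with `k ≥ 1` coincide.
-/

namespace Module.End

theorem genEigenspace_top_eq_eigenspace_of_ker_sq {K V : Type*} [Field K] [AddCommGroup V]
    [Module K V] {f : End K V} {μ : K}
    (h : LinearMap.ker ((f - μ • 1) ^ 2) = LinearMap.ker (f - μ • 1)) :
    f.genEigenspace μ ⊤ = f.eigenspace μ := by
  refine le_antisymm ?_ ((f.genEigenspace μ).monotone le_top)
  rw [genEigenspace_top, iSup_le_iff]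
  rintro (_ | k)
  · simp
  · have h' := ker_pow_constant (f := f - μ • 1) (k := 1) (by simpa using h.symm) k
    rw [pow_one] at h'
    rw [genEigenspace_nat, eigenspace, genEigenspace_one, add_comm]
    exact h'.ge

theorem pow_succ_apply_of_sub_smul_sq_apply_eq_zero {R M : Type*} [CommRing R] [AddCommGroup M]
    [Module R M] {f : End R M} {μ : R} {v : M} (hv : ((f - μ • 1) ^ 2 : End R M) v = 0) (m : ℕ) :
    (f ^ (m + 1)) v = μ ^ (m + 1) • v + ((m + 1) * μ ^ m) • (f - μ • 1) v := by
  have hw : f ((f - μ • 1) v) = μ • (f - μ • 1) v := by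
    rw [pow_two, mul_apply, LinearMap.sub_apply, sub_eq_zero] at hv
    simpa using hv
  have hfv : f v = μ • v + (f - μ • 1) v := by simp
  induction m with
  | zero => simp
  | succ m ih =>
    rw [pow_succ', mul_apply, ih, map_add, map_smul, map_smul, hfv, hw]
    push_cast
    module

end Module.End

theorem eq_zero_of_forall_natCast_mul_norm_le {E : Type*} [NormedAddCommGroup E] {w : E} {K : ℝ}
    (h : ∀ m : ℕ, m * ‖w‖ ≤ K) : w = 0 := by
  by_contra hw
  have hw' : 0 < ‖w‖ := norm_pos_iff.mpr hw
  obtain ⟨m, hm⟩ := exists_nat_gt (K / ‖w‖)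
  exact (h m).not_gt ((div_lt_iff₀ hw').mp hm)

theorem ContinuousLinearMap.ker_sq_sub_smul_eq_ker_of_norm_pow_le {𝕜 E : Type*} [RCLike 𝕜]
    [NormedAddCommGroup E] [NormedSpace 𝕜 E] (φ : E →L[𝕜] E) {C r : ℝ} (hr : 0 < r)
    (hbound : ∀ m : ℕ, 1 ≤ m → ‖φ ^ m‖ ≤ C * r ^ m) {μ : 𝕜} (hμ : ‖μ‖ = r) :
    LinearMap.ker (((φ : E →ₗ[𝕜] E) - μ • 1) ^ 2) = LinearMap.ker ((φ : E →ₗ[𝕜] E) - μ • 1) := by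
  refine le_antisymm (fun v hv ↦ ?_) (by rw [pow_two]; exact LinearMap.ker_le_ker_comp _ _)
  set w := ((φ : E →ₗ[𝕜] E) - μ • 1) v
  rw [LinearMap.mem_ker] at hv ⊢
  refine eq_zero_of_forall_natCast_mul_norm_le (K := (C + 1) * r * ‖v‖) fun m ↦ ?_
  have hpow : ((φ : E →ₗ[𝕜] E) ^ (m + 1)) v = (φ ^ (m + 1)) v :=
    LinearMap.congr_fun (map_pow ContinuousLinearMap.toLinearMapRingHom φ (m + 1)).symm v
  have hw : ((m + 1 : 𝕜) * μ ^ m) • w = (φ ^ (m + 1)) v - μ ^ (m + 1) • v := by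
    rw [← hpow, Module.End.pow_succ_apply_of_sub_smul_sq_apply_eq_zero hv, add_sub_cancel_left]
  have key : r ^ m * ((m + 1) * ‖w‖) ≤ r ^ m * ((C + 1) * r * ‖v‖) :=
    calc r ^ m * ((m + 1) * ‖w‖) = ‖((m + 1 : 𝕜) * μ ^ m) • w‖ := by
          have hm : ‖(m + 1 : 𝕜)‖ = m + 1 := by
            exact_mod_cast RCLike.norm_natCast (K := 𝕜) (m + 1)
          rw [norm_smul, norm_mul, norm_pow, hμ, hm]
          ring
      _ ≤ ‖(φ ^ (m + 1)) v‖ + ‖μ ^ (m + 1) • v‖ := hw ▸ norm_sub_le _ _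
      _ ≤ C * r ^ (m + 1) * ‖v‖ + r ^ (m + 1) * ‖v‖ := by
          rw [norm_smul, norm_pow, hμ]
          gcongr
          exact (φ ^ (m + 1)).le_of_opNorm_le (hbound _ (Nat.le_add_left 1 m)) v
      _ = r ^ m * ((C + 1) * r * ‖v‖) := by ring
  linarith [le_of_mul_le_mul_left key (pow_pos hr m), norm_nonneg w]

theorem stmt5_general {V : Type*} [NormedAddCommGroup V] [NormedSpace ℂ V]
    (φ : V →L[ℂ] V) (C r : ℝ) (hr : 0 < r)
    (hbound : ∀ m : ℕ, 1 ≤ m → ‖φ ^ m‖ ≤ C * r ^ m) :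
    ∀ μ : ℂ, ‖μ‖ = r →
      (Module.End.genEigenspace (φ : V →ₗ[ℂ] V) μ ⊤ =
        Module.End.eigenspace (φ : V →ₗ[ℂ] V) μ) ∧
      LinearMap.ker (((φ : V →ₗ[ℂ] V) - μ • 1) ^ 2) =
        LinearMap.ker ((φ : V →ₗ[ℂ] V) - μ • 1) := by
  intro μ hμ
  have hker := φ.ker_sq_sub_smul_eq_ker_of_norm_pow_le hr hbound hμ
  exact ⟨Module.End.genEigenspace_top_eq_eigenspace_of_ker_sq hker, hker⟩

/-- Let `V` be a finite-dimensional normed complex vector space and `φ` a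
(continuous) linear endomorphism of `V` with `‖φ^m‖ ≤ C * r^m` for all `m ≥ 1`, where
`C > 0`, `r > 0`. Then for every `μ : ℂ` with `|μ| = r`, the generalized eigenspace of `φ`
for `μ` (the union of `ker (φ - μ•id)^j` over all `j`) equals the eigenspace of `φ` for `μ`;
in particular `ker ((φ - μ•id)^2) = ker (φ - μ•id)`. -/
theorem stmt5 {V : Type*} [NormedAddCommGroup V] [NormedSpace ℂ V] [FiniteDimensional ℂ V]
    (φ : V →L[ℂ] V) (C r : ℝ) (hC : 0 < C) (hr : 0 < r)
    (hbound : ∀ m : ℕ, 1 ≤ m → ‖φ ^ m‖ ≤ C * r ^ m) :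
    ∀ μ : ℂ, ‖μ‖ = r →
      (Module.End.genEigenspace (φ : V →ₗ[ℂ] V) μ ⊤ =
        Module.End.eigenspace (φ : V →ₗ[ℂ] V) μ) ∧
      LinearMap.ker (((φ : V →ₗ[ℂ] V) - μ • 1) ^ 2) =
        LinearMap.ker ((φ : V →ₗ[ℂ] V) - μ • 1) :=
  stmt5_general φ C r hr hbound
end

section
/- Let V be a finite-dimensional normed complex vector space and φ a linear endomorphism of V. Suppose there exist constants C > 0 and r > 0 such that the operator norm satisfies ‖φ^m‖ ≤ C · r^m for every integer m ≥ 1, and suppose every eigenvalue λ of φ satisfies |λ| = r. Then φ is diagonalizable (semisimple), i.e., V admits a basis consisting of eigenvectors of φ. -/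
/-!
If `φ v = μ • v + w` and `φ w = μ • w`, then `φ^(n+1) v = μ^(n+1) • v + (n+1) μ^n • w`. When
`‖μ‖ = r` and `‖φ^m‖ ≤ C r^m`, dividing by `r^n` bounds `(n+1) ‖w‖` uniformly in `n`, so `w = 0`.
Thus `ker (φ - μ)^2 = ker (φ - μ)` for every `μ`: generalized eigenspaces are eigenspaces, and over
`ℂ` the generalized eigenspaces span `V`.
-/

open Module End LinearMap

namespace Module.End

variable {R M : Type*} [CommSemiring R] [AddCommMonoid M] [Module R M]

theorem pow_succ_apply_of_apply_eq_smul_add {f : End R M} {μ : R} {v w : M}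
    (hv : f v = μ • v + w) (hw : f w = μ • w) (n : ℕ) :
    (f ^ (n + 1)) v = μ ^ (n + 1) • v + ((n + 1 : R) * μ ^ n) • w := by
  induction n with
  | zero => simpa using hv
  | succ n ih =>
    rw [pow_succ', mul_apply, ih]
    simp only [map_add, map_smul, hv, hw, smul_add, smul_smul]
    push_cast
    match_scalars <;> ring

end Module.End

namespace ContinuousLinearMap

variable {𝕜 E : Type*} [RCLike 𝕜] [NormedAddCommGroup E] [NormedSpace 𝕜 E]
  {φ : E →L[𝕜] E} {C r : ℝ}

theorem eq_zero_of_apply_eq_smul_add (hbound : ∀ m : ℕ, 1 ≤ m → ‖φ ^ m‖ ≤ C * r ^ m)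
    (hr : 0 < r) {μ : 𝕜} (hμ : ‖μ‖ = r) {v w : E} (hv : φ v = μ • v + w) (hw : φ w = μ • w) :
    w = 0 := by
  have hlinear : ∀ n : ℕ, (n + 1) * ‖w‖ ≤ (C + 1) * r * ‖v‖ := by
    intro n
    have hpow : (φ ^ (n + 1)) v = μ ^ (n + 1) • v + ((n + 1 : 𝕜) * μ ^ n) • w := by
      rw [← coe_coe, toLinearMap_pow]
      exact Module.End.pow_succ_apply_of_apply_eq_smul_add hv hw n
    have hupper : ‖(φ ^ (n + 1)) v‖ ≤ C * r ^ (n + 1) * ‖v‖ :=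
      (le_opNorm _ v).trans (by gcongr; exact hbound _ n.succ_pos)
    have hlower := norm_le_add_norm_add' (μ ^ (n + 1) • v) (((n + 1 : 𝕜) * μ ^ n) • w)
    rw [← hpow, norm_smul, norm_smul, norm_mul, norm_pow, norm_pow, hμ,
      show ‖(n + 1 : 𝕜)‖ = n + 1 by exact_mod_cast RCLike.norm_natCast (K := 𝕜) (n + 1)] at hlower
    rw [← mul_le_mul_iff_of_pos_right (pow_pos hr n)]
    calc (n + 1) * ‖w‖ * r ^ n = (n + 1) * r ^ n * ‖w‖ := by ring
      _ ≤ ‖(φ ^ (n + 1)) v‖ + r ^ (n + 1) * ‖v‖ := hlower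
      _ ≤ C * r ^ (n + 1) * ‖v‖ + r ^ (n + 1) * ‖v‖ := by gcongr
      _ = (C + 1) * r * ‖v‖ * r ^ n := by ring
  by_contra hw0
  have hwpos : 0 < ‖w‖ := norm_pos_iff.mpr hw0
  obtain ⟨n, hn⟩ := exists_nat_gt ((C + 1) * r * ‖v‖ / ‖w‖)
  rw [div_lt_iff₀ hwpos] at hn
  nlinarith [hlinear n]

theorem ker_sq_sub_le_ker_sub (hbound : ∀ m : ℕ, 1 ≤ m → ‖φ ^ m‖ ≤ C * r ^ m) (hr : 0 < r)
    {μ : 𝕜} (hμ : HasEigenvalue (φ : E →ₗ[𝕜] E) μ → ‖μ‖ = r) :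
    ker (((φ : E →ₗ[𝕜] E) - μ • 1) ^ 2) ≤ ker ((φ : E →ₗ[𝕜] E) - μ • 1) := by
  intro v hv
  set w := ((φ : E →ₗ[𝕜] E) - μ • 1) v with hw_def
  have hw : φ w = μ • w := by
    rw [mem_ker, pow_two, mul_apply, ← hw_def, LinearMap.sub_apply, sub_eq_zero] at hv
    exact hv
  have hvw : φ v = μ • v + w := by
    simp only [hw_def, LinearMap.sub_apply, LinearMap.smul_apply, one_apply, coe_coe]
    abel
  rw [mem_ker]
  by_contra hw0
  have hμr := hμ (hasEigenvalue_of_hasEigenvector ⟨mem_eigenspace_iff.mpr hw, hw0⟩)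
  exact hw0 (eq_zero_of_apply_eq_smul_add hbound hr hμr hvw hw)

end ContinuousLinearMap

namespace Module.End

variable {K V : Type*} [Field K] [AddCommGroup V] [Module K V]

theorem maxGenEigenspace_eq_eigenspace_of_ker_sq_le {f : End K V} {μ : K}
    (h : ker ((f - μ • 1) ^ 2) ≤ ker (f - μ • 1)) :
    f.maxGenEigenspace μ = f.eigenspace μ := by
  have hstable := ker_pow_constant (f := f - μ • 1) (k := 1)
    (le_antisymm (by rw [pow_two]; exact ker_le_ker_comp _ _) (by simpa using h))
  refine le_antisymm ?_ eigenspace_le_maxGenEigenspace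
  rw [maxGenEigenspace, genEigenspace_top]
  refine iSup_le fun k ↦ ?_
  calc f.genEigenspace μ k ≤ f.genEigenspace μ (1 + k : ℕ) := (f.genEigenspace μ).monotone (by simp)
    _ = f.eigenspace μ := by rw [genEigenspace_nat, ← hstable, pow_one, eigenspace_def]

theorem exists_basis_of_iSup_eigenspace_eq_top [FiniteDimensional K V] {f : End K V}
    (h : ⨆ μ, f.eigenspace μ = ⊤) :
    ∃ b : Basis (Fin (finrank K V)) K V, ∀ i, ∃ μ : K, f (b i) = μ • b i := by
  classical
  have hint : DirectSum.IsInternal f.eigenspace :=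
    DirectSum.isInternal_submodule_of_iSupIndep_of_iSup_eq_top f.eigenspaces_iSupIndep h
  let v (μ : K) := Free.chooseBasis K (f.eigenspace μ)
  let e := (hint.collectedBasis v).indexEquiv (finBasis K V)
  refine ⟨(hint.collectedBasis v).reindex e, fun i ↦ ⟨(e.symm i).1, ?_⟩⟩
  rw [Basis.reindex_apply, ← mem_eigenspace_iff]
  exact hint.collectedBasis_mem v (e.symm i)

end Module.End

theorem stmt6_general {V : Type*} [NormedAddCommGroup V] [NormedSpace ℂ V] [FiniteDimensional ℂ V]
    (φ : V →L[ℂ] V) (C r : ℝ) (hr : 0 < r)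
    (hbound : ∀ m : ℕ, 1 ≤ m → ‖φ ^ m‖ ≤ C * r ^ m)
    (heig : ∀ μ : ℂ, Module.End.HasEigenvalue (φ : V →ₗ[ℂ] V) μ → ‖μ‖ = r) :
    ∃ b : Module.Basis (Fin (Module.finrank ℂ V)) ℂ V,
      ∀ i, ∃ μ : ℂ, φ (b i) = μ • b i := by
  refine Module.End.exists_basis_of_iSup_eigenspace_eq_top ?_
  have hmax (μ : ℂ) := Module.End.maxGenEigenspace_eq_eigenspace_of_ker_sq_le
    (φ.ker_sq_sub_le_ker_sub hbound hr (heig μ))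
  simpa only [hmax] using Module.End.iSup_maxGenEigenspace_eq_top (φ : V →ₗ[ℂ] V)

/-- Let `V` be a finite-dimensional normed complex vector space and `φ` a
(continuous) linear endomorphism of `V` with `‖φ^m‖ ≤ C * r^m` for all `m ≥ 1`, where
`C > 0`, `r > 0`. If every eigenvalue `μ` of `φ` satisfies `|μ| = r`, then `φ` is
diagonalizable: `V` admits a basis consisting of eigenvectors of `φ`. -/
theorem stmt6 {V : Type*} [NormedAddCommGroup V] [NormedSpace ℂ V] [FiniteDimensional ℂ V]
    (φ : V →L[ℂ] V) (C r : ℝ) (hC : 0 < C) (hr : 0 < r)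
    (hbound : ∀ m : ℕ, 1 ≤ m → ‖φ ^ m‖ ≤ C * r ^ m)
    (heig : ∀ μ : ℂ, Module.End.HasEigenvalue (φ : V →ₗ[ℂ] V) μ → ‖μ‖ = r) :
    ∃ b : Module.Basis (Fin (Module.finrank ℂ V)) ℂ V,
      ∀ i, ∃ μ : ℂ, φ (b i) = μ • b i :=
  stmt6_general φ C r hr hbound heig
end
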